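/- In a Hom-Hopf algebra (H, μ, Δ, ε, S, α), the antipode S is an anti-algebra map and anti-coalgebra map: S(gh) = S(h)S(g), S(1) = 1, Δ(S(h)) = S(h₂) ⊗ S(h₁), and ε∘S = ε. -/

import Mathlib

open scoped TensorProduct BigOperators

universe u v

/-- A Hom-Hopf algebra over a field `k`, with a chosen Sweedler-type
decomposition (`Idx`, `T`, `d1`, `d2`) of the comultiplication:
`comul h = ∑ i in T h, d1 h i ⊗ₜ d2 h i`.  The structure map `α` is assumed
bijective (a linear equivalence), as throughout the paper. -/
structure HomHopf (k : Type u) (H : Type v) [Field k] [AddCommGroup H] [Module k H] where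
  mul : H →ₗ[k] H →ₗ[k] H
  one : H
  α : H ≃ₗ[k] H
  comul : H →ₗ[k] H ⊗[k] H
  counit : H →ₗ[k] k
  S : H →ₗ[k] H
  Idx : Type v
  T : H → Finset Idx
  d1 : H → Idx → H
  d2 : H → Idx → H
  repr : ∀ h, comul h = ∑ i ∈ T h, d1 h i ⊗ₜ[k] d2 h i
  α_one : α one = one
  α_mul : ∀ x y, α (mul x y) = mul (α x) (α y)
  one_mul : ∀ x, mul one x = α x
  mul_one : ∀ x, mul x one = α x
  hom_assoc : ∀ x y z, mul (α x) (mul y z) = mul (mul x y) (α z)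
  counit_α : ∀ h, counit (α h) = counit h
  comul_α : ∀ h, comul (α h) = ∑ i ∈ T h, α (d1 h i) ⊗ₜ[k] α (d2 h i)
  counit_left : ∀ h, ∑ i ∈ T h, counit (d1 h i) • d2 h i = α h
  counit_right : ∀ h, ∑ i ∈ T h, counit (d2 h i) • d1 h i = α h
  hom_coassoc : ∀ h,
    (TensorProduct.assoc k H H H) (∑ i ∈ T h, comul (d1 h i) ⊗ₜ[k] α (d2 h i))
      = ∑ i ∈ T h, α (d1 h i) ⊗ₜ[k] comul (d2 h i)
  counit_one : counit one = 1
  counit_mul : ∀ x y, counit (mul x y) = counit x * counit y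
  comul_one : comul one = one ⊗ₜ[k] one
  comul_mul : ∀ x y, comul (mul x y)
      = ∑ i ∈ T x, ∑ j ∈ T y, mul (d1 x i) (d1 y j) ⊗ₜ[k] mul (d2 x i) (d2 y j)
  S_α : ∀ h, S (α h) = α (S h)
  S_left : ∀ h, ∑ i ∈ T h, mul (S (d1 h i)) (d2 h i) = counit h • one
  S_right : ∀ h, ∑ i ∈ T h, mul (d1 h i) (S (d2 h i)) = counit h • one

/-- A unital Hom-associative algebra with bijective structure map. -/
structure HomAlg (k : Type u) (A : Type v) [Field k] [AddCommGroup A] [Module k A] where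
  mul : A →ₗ[k] A →ₗ[k] A
  one : A
  β : A ≃ₗ[k] A
  β_one : β one = one
  β_mul : ∀ x y, β (mul x y) = mul (β x) (β y)
  one_mul : ∀ x, mul one x = β x
  mul_one : ∀ x, mul x one = β x
  hom_assoc : ∀ x y z, mul (β x) (mul y z) = mul (mul x y) (β z)

/-!
Since `α` is bijective, `H` with the untwisted operations `α⁻¹ ∘ μ` and `Δ ∘ α⁻¹` and the same
unit, counit and antipode is an ordinary Hopf algebra; twisting back by `α` recovers `μ` and `Δ`,
and `S` commutes with `α`. The four identities are therefore the classical ones for ordinary Hopf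
algebras. Of these, `Δ ∘ S = (S ⊗ S) ∘ τ ∘ Δ` follows from uniqueness of inverses in the
convolution monoid `Hom(H, H ⊗ H)`: both sides are inverse to `Δ`.
-/

open TensorProduct WithConv
open scoped RingTheory.LinearMap

section
open LinearMap

variable {R A M N P : Type*} [CommSemiring R]

lemma Coalgebra.map_counit_comp_assoc_comp_map_comul_comp [AddCommMonoid A] [Module R A]
    [Coalgebra R A] [AddCommMonoid M] [Module R M] [AddCommMonoid N] [Module R N]
    [AddCommMonoid P] [Module R P] (g : A ⊗[R] M →ₗ[R] N) (f : P →ₗ[R] A ⊗[R] M) :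
    map ε g ∘ₗ (_root_.TensorProduct.assoc R A A M).toLinearMap ∘ₗ map δ id ∘ₗ f =
      (_root_.TensorProduct.lid R N).symm.toLinearMap ∘ₗ g ∘ₗ f := by
  have h : map ε g ∘ₗ (_root_.TensorProduct.assoc R A A M).toLinearMap ∘ₗ map δ id =
      (_root_.TensorProduct.lid R N).symm.toLinearMap ∘ₗ g := by
    have hg : map (ε : A →ₗ[R] R) g = lTensor R g ∘ₗ map ε id := by
      rw [lTensor, ← map_comp]; rfl
    rw [hg, comp_assoc, ← comp_assoc _ _ (map ε id), ← map_id, map_map_comp_assoc_eq, comp_assoc,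
      ← map_comp, ← rTensor_def (M := A), Coalgebra.rTensor_counit_comp_comul]
    ext x m
    simp
  simpa only [comp_assoc] using congrArg (· ∘ₗ f) h

variable [Semiring A] [HopfAlgebra R A]

lemma LinearMap.comul_left_inv :
    toConv (map (HopfAlgebra.antipode R) (HopfAlgebra.antipode R) ∘ₗ
      (TensorProduct.comm R A A).toLinearMap ∘ₗ δ) * toConv (δ : A →ₗ[R] A ⊗[R] A) = 1 := by
  have hS : μ ∘ₗ map (HopfAlgebra.antipode R) id ∘ₗ δ = η ∘ₗ (ε : A →ₗ[R] R) := by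
    rw [← rTensor_def]
    exact HopfAlgebra.mul_antipode_rTensor_comul
  apply WithConv.ext
  simp only [convMul_def, convOne_def, ofConv_toConv, mul'_tensor]
  -- In Sweedler notation the goal is `∑ S(a₂)a₃ ⊗ S(a₁)a₄ = ε(a) (1 ⊗ 1)`; this normalizes it to
  -- `(μ(S ⊗ 1)δ ⊗ g) ∘ α ∘ (δ ⊗ 1) ∘ τ ∘ δ = η ∘ ε`.
  simp only [coassoc_simps]
  set g := μ ∘ₗ map (HopfAlgebra.antipode R) id ∘ₗ (TensorProduct.comm R A A).toLinearMap
  have hg : g ∘ₗ (TensorProduct.comm R A A).toLinearMap ∘ₗ δ = η ∘ₗ (ε : A →ₗ[R] R) := by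
    rw [← hS]
    ext
    simp [g]
  rw [hS, ← id_comp g, map_comp, comp_assoc, Coalgebra.map_counit_comp_assoc_comp_map_comul_comp,
    hg]
  ext
  simp [Algebra.algebraMap_eq_smul_one, Algebra.TensorProduct.one_def]

lemma HopfAlgebra.comul_antipode (a : A) :
    δ (antipode R a) = map (antipode R) (antipode R) (TensorProduct.comm R A A (δ a)) :=
  LinearMap.congr_fun (congrArg ofConv
    (left_inv_eq_right_inv (LinearMap.comul_left_inv (R := R) (A := A))
      LinearMap.comul_right_inv)).symm a

end

namespace HomHopf

variable {k : Type u} {H : Type v} [Field k] [AddCommGroup H] [Module k H] (HH : HomHopf k H)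

def untwistMul : H →ₗ[k] H →ₗ[k] H := HH.mul.compr₂ HH.α.symm.toLinearMap

def untwistComul : H →ₗ[k] H ⊗[k] H := HH.comul ∘ₗ HH.α.symm.toLinearMap

lemma untwistMul_apply (x y : H) : HH.untwistMul x y = HH.α.symm (HH.mul x y) := rfl

lemma untwistMul_α (x y : H) : HH.untwistMul (HH.α x) (HH.α y) = HH.mul x y := by
  simp [untwistMul, ← HH.α_mul]

lemma untwistComul_α (x : H) : HH.untwistComul (HH.α x) = HH.comul x := by
  simp [untwistComul]

lemma counit_α_symm (x : H) : HH.counit (HH.α.symm x) = HH.counit x := by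
  rw [← HH.counit_α, LinearEquiv.apply_symm_apply]

lemma α_symm_one : HH.α.symm HH.one = HH.one := by
  rw [LinearEquiv.symm_apply_eq, HH.α_one]

lemma untwistMul_assoc (x y z : H) :
    HH.untwistMul (HH.untwistMul x y) z = HH.untwistMul x (HH.untwistMul y z) := by
  obtain ⟨a, rfl⟩ := HH.α.surjective x
  obtain ⟨b, rfl⟩ := HH.α.surjective y
  obtain ⟨c, rfl⟩ := HH.α.surjective z
  rw [untwistMul_α, untwistMul_α, untwistMul_apply, untwistMul_apply, HH.hom_assoc]

lemma one_untwistMul (x : H) : HH.untwistMul HH.one x = x := by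
  obtain ⟨a, rfl⟩ := HH.α.surjective x
  rw [← HH.α_one, untwistMul_α, HH.one_mul]

lemma untwistMul_one (x : H) : HH.untwistMul x HH.one = x := by
  obtain ⟨a, rfl⟩ := HH.α.surjective x
  rw [← HH.α_one, untwistMul_α, HH.mul_one]

lemma counit_untwistMul (x y : H) :
    HH.counit (HH.untwistMul x y) = HH.counit x * HH.counit y := by
  rw [untwistMul_apply, counit_α_symm, counit_mul]

lemma untwistComul_coassoc (x : H) :
    TensorProduct.assoc k H H H (HH.untwistComul.rTensor H (HH.untwistComul x)) =
      HH.untwistComul.lTensor H (HH.untwistComul x) := by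
  obtain ⟨g, rfl⟩ := HH.α.surjective x
  obtain ⟨h, rfl⟩ := HH.α.surjective g
  simpa only [untwistComul_α, HH.comul_α, map_sum, LinearMap.rTensor_tmul,
    LinearMap.lTensor_tmul] using HH.hom_coassoc h

lemma rTensor_counit_untwistComul (x : H) :
    HH.counit.rTensor H (HH.untwistComul x) = 1 ⊗ₜ x := by
  obtain ⟨g, rfl⟩ := HH.α.surjective x
  rw [untwistComul_α, HH.repr g, ← HH.counit_left g, map_sum, tmul_sum]
  refine Finset.sum_congr rfl fun i _ => ?_
  rw [LinearMap.rTensor_tmul, tmul_smul, smul_tmul', smul_eq_mul, _root_.mul_one]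

lemma lTensor_counit_untwistComul (x : H) :
    HH.counit.lTensor H (HH.untwistComul x) = x ⊗ₜ 1 := by
  obtain ⟨g, rfl⟩ := HH.α.surjective x
  rw [untwistComul_α, HH.repr g, ← HH.counit_right g, map_sum, sum_tmul]
  refine Finset.sum_congr rfl fun i _ => ?_
  rw [LinearMap.lTensor_tmul, smul_tmul, smul_eq_mul, _root_.mul_one]

def Untwist (_HH : HomHopf k H) : Type v := H

instance : AddCommGroup HH.Untwist := inferInstanceAs (AddCommGroup H)

instance : Ring HH.Untwist :=
  { (inferInstance : AddCommGroup HH.Untwist) with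
    mul := fun x y => HH.untwistMul x y
    one := HH.one
    mul_assoc := HH.untwistMul_assoc
    one_mul := HH.one_untwistMul
    mul_one := HH.untwistMul_one
    left_distrib := fun x y z => map_add (HH.untwistMul x) y z
    right_distrib := fun x y z => LinearMap.map_add₂ HH.untwistMul x y z
    zero_mul := fun x => LinearMap.map_zero₂ HH.untwistMul x
    mul_zero := fun x => map_zero (HH.untwistMul x) }

instance : Algebra k HH.Untwist :=
  letI : Module k HH.Untwist := inferInstanceAs (Module k H)
  Algebra.ofModule (fun r x y => LinearMap.map_smul₂ HH.untwistMul r x y)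
    (fun r x y => map_smul (HH.untwistMul x) r y)

instance : Coalgebra k HH.Untwist where
  comul := HH.untwistComul
  counit := HH.counit
  coassoc := LinearMap.ext HH.untwistComul_coassoc
  rTensor_counit_comp_comul := LinearMap.ext HH.rTensor_counit_untwistComul
  lTensor_counit_comp_comul := LinearMap.ext HH.lTensor_counit_untwistComul

def toUntwist : H ≃ₗ[k] HH.Untwist := LinearEquiv.refl k H

lemma exists_toUntwist_α (x : HH.Untwist) : ∃ a, HH.toUntwist (HH.α a) = x :=
  ⟨HH.α.symm x, HH.α.apply_symm_apply x⟩

lemma comul_toUntwist_α (x : H) :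
    Coalgebra.comul (R := k) (HH.toUntwist (HH.α x)) =
      ∑ i ∈ HH.T x, HH.toUntwist (HH.d1 x i) ⊗ₜ HH.toUntwist (HH.d2 x i) :=
  (HH.untwistComul_α x).trans (HH.repr x)

lemma toUntwist_α_mul_toUntwist_α (x y : H) :
    HH.toUntwist (HH.α x) * HH.toUntwist (HH.α y) = HH.toUntwist (HH.mul x y) :=
  HH.untwistMul_α x y

lemma comul_toUntwist_α_α (x : H) :
    Coalgebra.comul (R := k) (HH.toUntwist (HH.α (HH.α x))) =
      ∑ i ∈ HH.T x, HH.toUntwist (HH.α (HH.d1 x i)) ⊗ₜ HH.toUntwist (HH.α (HH.d2 x i)) :=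
  (HH.untwistComul_α _).trans (HH.comul_α x)

lemma comul_toUntwist_α_mul (x y : H) :
    Coalgebra.comul (R := k) (HH.toUntwist (HH.α (HH.mul x y))) =
      ∑ i ∈ HH.T x, ∑ j ∈ HH.T y, HH.toUntwist (HH.mul (HH.d1 x i) (HH.d1 y j)) ⊗ₜ
        HH.toUntwist (HH.mul (HH.d2 x i) (HH.d2 y j)) :=
  (HH.untwistComul_α _).trans (HH.comul_mul x y)

lemma untwist_comul_mul (x y : HH.Untwist) :
    Coalgebra.comul (R := k) (x * y) = Coalgebra.comul x * Coalgebra.comul y := by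
  obtain ⟨a, rfl⟩ := HH.exists_toUntwist_α x
  obtain ⟨b, rfl⟩ := HH.exists_toUntwist_α y
  obtain ⟨a, rfl⟩ := HH.α.surjective a
  obtain ⟨b, rfl⟩ := HH.α.surjective b
  rw [toUntwist_α_mul_toUntwist_α, ← HH.α_mul, comul_toUntwist_α_mul, comul_toUntwist_α_α,
    comul_toUntwist_α_α, Finset.sum_mul_sum]
  simp only [Algebra.TensorProduct.tmul_mul_tmul, toUntwist_α_mul_toUntwist_α]

lemma untwistComul_one : HH.untwistComul HH.one = HH.one ⊗ₜ HH.one := by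
  simp only [untwistComul, LinearMap.comp_apply, LinearEquiv.coe_coe, α_symm_one, HH.comul_one]

instance : Bialgebra k HH.Untwist :=
  Bialgebra.mk' k HH.Untwist HH.counit_one (HH.counit_untwistMul _ _) HH.untwistComul_one
    (HH.untwist_comul_mul _ _)

lemma sum_S_untwistMul (x : H) :
    ∑ i ∈ HH.T x, HH.untwistMul (HH.S (HH.d1 x i)) (HH.d2 x i) = HH.counit (HH.α x) • HH.one := by
  simp only [untwistMul_apply, ← map_sum, HH.S_left, map_smul, α_symm_one, counit_α]

lemma sum_untwistMul_S (x : H) :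
    ∑ i ∈ HH.T x, HH.untwistMul (HH.d1 x i) (HH.S (HH.d2 x i)) = HH.counit (HH.α x) • HH.one := by
  simp only [untwistMul_apply, ← map_sum, HH.S_right, map_smul, α_symm_one, counit_α]

instance : HopfAlgebra k HH.Untwist where
  antipode := HH.S
  mul_antipode_rTensor_comul := by
    ext x
    obtain ⟨a, rfl⟩ := HH.exists_toUntwist_α x
    simp only [LinearMap.comp_apply, comul_toUntwist_α, map_sum]
    exact HH.sum_S_untwistMul a
  mul_antipode_lTensor_comul := by
    ext x
    obtain ⟨a, rfl⟩ := HH.exists_toUntwist_α x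
    simp only [LinearMap.comp_apply, comul_toUntwist_α, map_sum]
    exact HH.sum_untwistMul_S a

lemma antipode_toUntwist (x : H) : HopfAlgebra.antipode k (HH.toUntwist x) = HH.toUntwist (HH.S x) := rfl

lemma S_mul_antidistrib (g h : H) : HH.S (HH.mul g h) = HH.mul (HH.S h) (HH.S g) := by
  have key := HopfAlgebra.antipode_mul_antidistrib (R := k) (HH.toUntwist (HH.α g))
    (HH.toUntwist (HH.α h))
  rw [toUntwist_α_mul_toUntwist_α, antipode_toUntwist, antipode_toUntwist, antipode_toUntwist, HH.S_α, HH.S_α,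
    toUntwist_α_mul_toUntwist_α] at key
  exact HH.toUntwist.injective key

lemma S_one : HH.S HH.one = HH.one :=
  HopfAlgebra.antipode_one (R := k) (A := HH.Untwist)

lemma counit_S (h : H) : HH.counit (HH.S h) = HH.counit h :=
  HopfAlgebra.counit_antipode (R := k) (A := HH.Untwist) h

lemma comul_S (h : H) :
    HH.comul (HH.S h) = ∑ i ∈ HH.T h, HH.S (HH.d2 h i) ⊗ₜ[k] HH.S (HH.d1 h i) := by
  have key := HopfAlgebra.comul_antipode (R := k) (HH.toUntwist (HH.α h))
  simp only [comul_toUntwist_α, map_sum, TensorProduct.comm_tmul, TensorProduct.map_tmul] at key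
  rw [← HH.untwistComul_α, ← HH.S_α]
  exact key

end HomHopf

theorem antipode_anti_hom {k : Type u} {H : Type v} [Field k] [AddCommGroup H] [Module k H]
    (HH : HomHopf k H) :
    (∀ g h : H, HH.S (HH.mul g h) = HH.mul (HH.S h) (HH.S g)) ∧
    (HH.S HH.one = HH.one) ∧
    (∀ h : H, HH.comul (HH.S h) = ∑ i ∈ HH.T h, HH.S (HH.d2 h i) ⊗ₜ[k] HH.S (HH.d1 h i)) ∧
    (∀ h : H, HH.counit (HH.S h) = HH.counit h) :=
  ⟨HH.S_mul_antidistrib, HH.S_one, HH.comul_S, HH.counit_S⟩
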